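/- Let K : ℝⁿ × ℝⁿ → ℂ be measurable with |K(x,y)| ≤ C₀ |x−y|^{−(N+n+1)} whenever |x−y| ≥ 1, for some N > 0. Let B = B(x₀, r) be a ball with 1 < r ≤ 2, let 1 < q < ∞, and let a ∈ L^q(ℝⁿ) be supported in B with ‖a‖_{L^q} ≤ |B|^{1/q − 1}. Define Ta(x) = ∫ K(x,y) a(y) dy. Then for every integer k ≥ 1, ‖Ta‖_{L^q(2^{k+1}B ∖ 2^k B)} ≤ C · 2^{−k} (1 + 2^k r)^{−N} |2^k B|^{1/q − 1}, with C depending only on C₀, n, q, N. -/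

import Mathlib

/-!
Hölder's inequality on `B` and the normalisation of `a` give `‖a‖_{L¹} ≤ 1`. For `x ∉ 2^k B` and
`y ∈ B` one has `|x - y| ≥ 2^k r - r ≥ 2^{k-1} r ≥ 1`, so the decay of `K` bounds `|Ta|` on the
annulus by `C₀ (2^{k-1} r)^{-(N+n+1)}`, and its `L^q` norm there by that times `|2^{k+1} B|^{1/q}`.
Since `2^k ≤ 2^k r` and `1 + 2^k r ≤ 2 ⋅ 2^k r`, this is the claimed bound with
`C = 2^{2N+2n+1} C₀ |B(0,1)|`.
-/

open Real MeasureTheory Metric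

open scoped ENNReal

theorem eLpNorm_one_le_of_support_subset {α ε : Type*} [MeasurableSpace α] {μ : Measure α}
    [TopologicalSpace ε] [ENormedAddMonoid ε] {f : α → ε} {s : Set α} {p : ℝ≥0∞}
    (hp : 1 ≤ p) (hf : AEStronglyMeasurable f μ) (hfs : Function.support f ⊆ s) :
    eLpNorm f 1 μ ≤ eLpNorm f p μ * μ s ^ (1 - 1 / p.toReal) := by
  have holder := eLpNorm_le_eLpNorm_mul_rpow_measure_univ hp (hf.restrict (s := s))
  rw [ENNReal.toReal_one, div_one, Measure.restrict_apply_univ] at holder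
  rwa [eLpNorm_restrict_eq_of_support_subset hfs,
    eLpNorm_restrict_eq_of_support_subset hfs] at holder

theorem eLpNorm_one_le_one_of_eLpNorm_le {α ε : Type*} [MeasurableSpace α] {μ : Measure α}
    [TopologicalSpace ε] [ENormedAddMonoid ε] {f : α → ε} {s : Set α} {p : ℝ≥0∞}
    (hp : 1 ≤ p) (hf : AEStronglyMeasurable f μ) (hfs : Function.support f ⊆ s)
    (hs₀ : μ s ≠ 0) (hs : μ s ≠ ∞) (hfp : eLpNorm f p μ ≤ μ s ^ (1 / p.toReal - 1)) :
    eLpNorm f 1 μ ≤ 1 := calc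
  eLpNorm f 1 μ ≤ eLpNorm f p μ * μ s ^ (1 - 1 / p.toReal) :=
    eLpNorm_one_le_of_support_subset hp hf hfs
  _ ≤ μ s ^ (1 / p.toReal - 1) * μ s ^ (1 - 1 / p.toReal) := by gcongr
  _ = 1 := by rw [← ENNReal.rpow_add _ _ hs₀ hs]; simp

theorem eLpNorm_restrict_le_of_forall_enorm_le {α ε : Type*} [MeasurableSpace α]
    {μ : Measure α} [TopologicalSpace ε] [ESeminormedAddMonoid ε] {f : α → ε} {s : Set α}
    {p C : ℝ≥0∞} (hs : MeasurableSet s) (hf : ∀ x ∈ s, ‖f x‖ₑ ≤ C) :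
    eLpNorm f p (μ.restrict s) ≤ C * μ s ^ p.toReal⁻¹ := by
  rw [← Measure.restrict_apply_univ s]
  exact eLpNorm_le_of_ae_enorm_bound ((ae_restrict_mem hs).mono hf)

theorem enorm_integral_mul_le {α 𝕜 : Type*} [MeasurableSpace α] {μ : Measure α}
    [NormedRing 𝕜] [NormMulClass 𝕜] [NormedSpace ℝ 𝕜] {K a : α → 𝕜} {s : Set α} {M : ℝ≥0∞}
    (hM : M ≠ ∞) (hK : ∀ y ∈ s, ‖K y‖ₑ ≤ M) (ha : ∀ y ∉ s, a y = 0) :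
    ‖∫ y, K y * a y ∂μ‖ₑ ≤ M * eLpNorm a 1 μ := by
  have hpt : ∀ y, ‖K y * a y‖ₑ ≤ M * ‖a y‖ₑ := fun y => by
    by_cases hy : y ∈ s
    · rw [enorm_mul]; gcongr; exact hK y hy
    · simp [ha y hy]
  calc ‖∫ y, K y * a y ∂μ‖ₑ ≤ ∫⁻ y, ‖K y * a y‖ₑ ∂μ := enorm_integral_le_lintegral_enorm _
    _ ≤ ∫⁻ y, M * ‖a y‖ₑ ∂μ := lintegral_mono hpt
    _ = M * eLpNorm a 1 μ := by rw [lintegral_const_mul' _ _ hM, eLpNorm_one_eq_lintegral_enorm]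

theorem half_le_dist_of_mem_ball_of_le_dist {X : Type*} [PseudoMetricSpace X] {x y z : X}
    {r s : ℝ} (hy : y ∈ ball z r) (hx : s ≤ dist x z) (hrs : 2 * r ≤ s) : s / 2 ≤ dist x y := by
  have := dist_triangle x y z
  rw [mem_ball] at hy
  linarith

theorem enorm_integral_kernel_mul_le_of_not_mem_ball {X 𝕜 : Type*} [PseudoMetricSpace X]
    [MeasurableSpace X] {μ : Measure X} [NormedRing 𝕜] [NormMulClass 𝕜] [NormedSpace ℝ 𝕜]
    {K : X → X → 𝕜} {a : X → 𝕜} {C₀ σ r s : ℝ} {x₀ x : X} (hC₀ : 0 ≤ C₀) (hσ : 0 ≤ σ)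
    (hK : ∀ x y, 1 ≤ dist x y → ‖K x y‖ ≤ C₀ * dist x y ^ (-σ))
    (ha : ∀ y ∉ ball x₀ r, a y = 0) (hrs : 2 * r ≤ s) (hs : 2 ≤ s) (hx : x ∉ ball x₀ s) :
    ‖∫ y, K x y * a y ∂μ‖ₑ ≤ ENNReal.ofReal (C₀ * (s / 2) ^ (-σ)) * eLpNorm a 1 μ := by
  refine enorm_integral_mul_le ENNReal.ofReal_ne_top (fun y hy => ?_) ha
  have hxy : s / 2 ≤ dist x y :=
    half_le_dist_of_mem_ball_of_le_dist hy (not_lt.mp (mt mem_ball.mpr hx)) hrs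
  rw [← ofReal_norm]
  exact ENNReal.ofReal_le_ofReal ((hK x y (by linarith)).trans (mul_le_mul_of_nonneg_left
    (Real.rpow_le_rpow_of_nonpos (by linarith) hxy (neg_nonpos.mpr hσ)) hC₀))

theorem eLpNorm_integral_kernel_mul_annulus_le {X 𝕜 : Type*} [PseudoMetricSpace X]
    [MeasurableSpace X] [OpensMeasurableSpace X] {μ : Measure X} [NormedRing 𝕜] [NormMulClass 𝕜]
    [NormedSpace ℝ 𝕜] {K : X → X → 𝕜} {a : X → 𝕜} {C₀ σ r s : ℝ} {x₀ : X} {p : ℝ≥0∞}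
    (hC₀ : 0 ≤ C₀) (hσ : 0 ≤ σ) (hK : ∀ x y, 1 ≤ dist x y → ‖K x y‖ ≤ C₀ * dist x y ^ (-σ))
    (ha : ∀ y ∉ ball x₀ r, a y = 0) (ha₁ : eLpNorm a 1 μ ≤ 1) (hrs : 2 * r ≤ s) (hs : 2 ≤ s) :
    eLpNorm (fun x => ∫ y, K x y * a y ∂μ) p (μ.restrict (ball x₀ (2 * s) \ ball x₀ s)) ≤
      ENNReal.ofReal (C₀ * (s / 2) ^ (-σ)) * μ (ball x₀ (2 * s)) ^ p.toReal⁻¹ := calc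
  _ ≤ ENNReal.ofReal (C₀ * (s / 2) ^ (-σ)) * μ (ball x₀ (2 * s) \ ball x₀ s) ^ p.toReal⁻¹ :=
    eLpNorm_restrict_le_of_forall_enorm_le (measurableSet_ball.diff measurableSet_ball)
      fun x hx => (enorm_integral_kernel_mul_le_of_not_mem_ball hC₀ hσ hK ha hrs hs hx.2).trans
        (mul_le_of_le_one_right' ha₁)
  _ ≤ ENNReal.ofReal (C₀ * (s / 2) ^ (-σ)) * μ (ball x₀ (2 * s)) ^ p.toReal⁻¹ := by
    gcongr; exact Set.sdiff_subset

theorem volume_ball_euclideanSpace {n : ℕ} (x : EuclideanSpace ℝ (Fin n)) {ρ : ℝ} (hρ : 0 < ρ) :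
    volume (ball x ρ) =
      ENNReal.ofReal (ρ ^ n * (volume (ball (0 : EuclideanSpace ℝ (Fin n)) 1)).toReal) := by
  rw [Measure.addHaar_ball_of_pos volume x hρ, finrank_euclideanSpace_fin,
    ENNReal.ofReal_mul (by positivity), ENNReal.ofReal_toReal measure_ball_lt_top.ne]

theorem annulus_constant_le (n k : ℕ) {C₀ N ρ s v : ℝ} (hC₀ : 0 ≤ C₀) (hN : 0 ≤ N)
    (hρ₁ : ρ ≤ 1) (hv : 0 < v) (hks : 2 ^ k ≤ s) :
    ((2 * s) ^ n * v) ^ ρ * (C₀ * (s / 2) ^ (-(N + n + 1))) ≤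
      C₀ * v * 2 ^ (2 * N + 2 * n + 1) * 2 ^ (-(k : ℝ)) * (1 + s) ^ (-N) *
        (s ^ n * v) ^ (ρ - 1) := by
  have hs₁ : 1 ≤ s := (one_le_pow₀ one_le_two).trans hks
  have hs₀ : 0 < s := one_pos.trans_le hs₁
  set V := s ^ n * v with hV
  have hV₀ : 0 < V := by positivity
  have e_big : ((2 * s) ^ n * v) ^ ρ = 2 ^ (n * ρ) * V ^ ρ := by
    rw [mul_pow, mul_assoc, Real.mul_rpow (by positivity) hV₀.le, ← Real.rpow_natCast,
      ← Real.rpow_mul zero_le_two]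
  have e_V : V ^ ρ = s ^ n * v * V ^ (ρ - 1) := by
    rw [Real.rpow_sub_one hV₀.ne', ← hV]; field_simp
  have e_kernel : s ^ n * (s / 2) ^ (-(N + n + 1)) = 2 ^ (N + n + 1) * s ^ (-N) * s⁻¹ := by
    rw [Real.rpow_neg (by positivity), Real.div_rpow hs₀.le zero_le_two,
      Real.rpow_add hs₀, Real.rpow_add hs₀, Real.rpow_natCast, Real.rpow_one,
      Real.rpow_neg hs₀.le]
    field_simp
  have b_two : (2 : ℝ) ^ (n * ρ) ≤ 2 ^ n := by
    rw [← Real.rpow_natCast]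
    exact Real.rpow_le_rpow_of_exponent_le one_le_two (mul_le_of_le_one_right n.cast_nonneg hρ₁)
  have b_inv : s⁻¹ ≤ 2 ^ (-(k : ℝ)) := by
    rw [Real.rpow_neg zero_le_two, Real.rpow_natCast]
    exact inv_anti₀ (by positivity) hks
  have b_decay : s ^ (-N) ≤ 2 ^ N * (1 + s) ^ (-N) := calc
    s ^ (-N) = 2 ^ N * (2 * s) ^ (-N) := by
      rw [Real.mul_rpow zero_le_two hs₀.le, ← mul_assoc, ← Real.rpow_add two_pos]; simp
    _ ≤ 2 ^ N * (1 + s) ^ (-N) := mul_le_mul_of_nonneg_left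
      (Real.rpow_le_rpow_of_nonpos (by positivity) (by linarith) (by linarith)) (by positivity)
  calc ((2 * s) ^ n * v) ^ ρ * (C₀ * (s / 2) ^ (-(N + n + 1)))
      = 2 ^ (n * ρ) * C₀ * v * (s ^ n * (s / 2) ^ (-(N + n + 1))) * V ^ (ρ - 1) := by
        rw [e_big, e_V]; ring
    _ = 2 ^ (n * ρ) * (2 ^ (N + n + 1) * C₀ * v) * s ^ (-N) * s⁻¹ * V ^ (ρ - 1) := by
        rw [e_kernel]; ring
    _ ≤ 2 ^ n * (2 ^ (N + n + 1) * C₀ * v) * (2 ^ N * (1 + s) ^ (-N)) * 2 ^ (-(k : ℝ)) *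
          V ^ (ρ - 1) := by gcongr
    _ = C₀ * v * 2 ^ (2 * N + 2 * n + 1) * 2 ^ (-(k : ℝ)) * (1 + s) ^ (-N) * V ^ (ρ - 1) := by
      have e_two : (2 : ℝ) ^ (2 * N + 2 * n + 1) = 2 ^ n * 2 ^ (N + n + 1) * 2 ^ N := by
        rw [← Real.rpow_natCast, ← Real.rpow_add two_pos, ← Real.rpow_add two_pos]; ring_nf
      rw [e_two]; ring

/-- Let K be measurable with |K(x,y)| ≤ C₀|x−y|^{−(N+n+1)} for |x−y| ≥ 1. If B = B(x₀,r)
with 1 < r ≤ 2, 1 < q < ∞, and a ∈ L^q is supported in B with ‖a‖_{L^q} ≤ |B|^{1/q−1},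
then ‖Ta‖_{L^q(2^{k+1}B ∖ 2^k B)} ≤ C 2^{−k}(1 + 2^k r)^{−N}|2^k B|^{1/q−1} for k ≥ 1. -/
theorem kernel_annulus_estimate (n : ℕ) (C₀ N q : ℝ) (hC₀ : 0 < C₀) (hN : 0 < N)
    (hq : 1 < q) :
    ∃ C > 0, ∀ (K : EuclideanSpace ℝ (Fin n) → EuclideanSpace ℝ (Fin n) → ℂ),
      Measurable (Function.uncurry K) →
      (∀ x y : EuclideanSpace ℝ (Fin n), 1 ≤ dist x y →
        ‖K x y‖ ≤ C₀ * dist x y ^ (-(N + n + 1))) →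
      ∀ (a : EuclideanSpace ℝ (Fin n) → ℂ) (x₀ : EuclideanSpace ℝ (Fin n)) (r : ℝ),
        1 < r → r ≤ 2 →
        MemLp a (ENNReal.ofReal q) volume →
        (∀ x, x ∉ ball x₀ r → a x = 0) →
        eLpNorm a (ENNReal.ofReal q) volume ≤
          ENNReal.ofReal ((volume (ball x₀ r)).toReal ^ (1/q - 1)) →
        ∀ k : ℕ, 1 ≤ k →
          eLpNorm (fun x => ∫ y, K x y * a y) (ENNReal.ofReal q)
              (volume.restrict (ball x₀ ((2:ℝ)^(k+1) * r) \ ball x₀ ((2:ℝ)^k * r))) ≤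
            ENNReal.ofReal (C * (2:ℝ)^(-(k:ℝ)) * (1 + (2:ℝ)^k * r) ^ (-N) *
              (volume (ball x₀ ((2:ℝ)^k * r))).toReal ^ (1/q - 1)) := by
  set v := (volume (ball (0 : EuclideanSpace ℝ (Fin n)) 1)).toReal
  have hv : 0 < v := ENNReal.toReal_pos (measure_ball_pos _ _ one_pos).ne' measure_ball_lt_top.ne
  refine ⟨C₀ * v * 2 ^ (2 * N + 2 * n + 1), by positivity, ?_⟩
  intro K _ hK a x₀ r hr₁ _ ha hsupp hanorm k hk
  set s := (2 : ℝ) ^ k * r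
  have hks : 2 ^ k ≤ s := le_mul_of_one_le_right (by positivity) hr₁.le
  have hrs : 2 * r ≤ s := mul_le_mul_of_nonneg_right
    ((pow_one (2 : ℝ)).symm.le.trans (pow_le_pow_right₀ one_le_two hk)) (by linarith)
  have hp : (ENNReal.ofReal q).toReal = q := ENNReal.toReal_ofReal (by linarith)
  have hB₀ : volume (ball x₀ r) ≠ 0 := (measure_ball_pos _ _ (by linarith)).ne'
  have ha₁ : eLpNorm a 1 volume ≤ 1 := by
    rw [ENNReal.toReal_rpow, ENNReal.ofReal_toReal
      (ENNReal.rpow_ne_top_of_ne_zero hB₀ measure_ball_lt_top.ne)] at hanorm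
    exact eLpNorm_one_le_one_of_eLpNorm_le (ENNReal.one_le_ofReal.mpr hq.le) ha.1
      (Function.support_subset_iff'.mpr hsupp) hB₀ measure_ball_lt_top.ne (by rwa [hp])
  rw [show (2 : ℝ) ^ (k + 1) * r = 2 * s by rw [pow_succ]; ring]
  refine (eLpNorm_integral_kernel_mul_annulus_le hC₀.le (by positivity) hK hsupp ha₁ hrs
    (by linarith)).trans ?_
  rw [hp, volume_ball_euclideanSpace x₀ (by positivity : 0 < 2 * s),
    volume_ball_euclideanSpace x₀ (by positivity : 0 < s), ENNReal.toReal_ofReal (by positivity),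
    ENNReal.ofReal_rpow_of_nonneg (by positivity) (by positivity),
    ← ENNReal.ofReal_mul (by positivity), mul_comm]
  refine ENNReal.ofReal_le_ofReal ?_
  simpa only [one_div] using
    annulus_constant_le n k hC₀.le hN.le (inv_le_one_of_one_le₀ hq.le) hv hks
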